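/- Let f : ℝ → ℝ be γ-Hölder on [0,T] with constant C > 0 (γ ∈ (0,1], T > 0), let p > 0 satisfy pγ > 1, let X := f + J where J is the jump part with jump sizes c_1,…,c_r and distinct jump times τ_1,…,τ_r ∈ (0,T), and fix a truncation factor Γ > 0. Then the truncated δ-step p-variation with threshold 3Γ√δ vanishes in the limit: lim_{δ→0+} ∑_{k=1}^{⌊T/δ⌋} |X(kδ) − X((k−1)δ)|^p · 1{|X(kδ) − X((k−1)δ)| ≤ 3Γ√δ} = 0; i.e. for small step sizes the fixed-Γ truncation removes every increment containing a nonzero jump, and the remaining continuous-part increments contribute nothing in the limit. -/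

import Mathlib

/-!
On the grid of mesh `δ` at most one interval `((k-1)δ, kδ]` contains a given jump time, so at
most `r` increments see a jump, and truncation caps each of them by `(3Γ√δ)^p`. On the remaining
`⌊T/δ⌋` intervals the increment is an increment of `f`, hence at most `Cδ^γ`. The truncated
variation is therefore at most `T C^p δ^(pγ-1) + r (3Γ√δ)^p`, which tends to `0` since `pγ > 1`.
-/

open Finset Filter Topology

noncomputable def truncPow (b p x : ℝ) : ℝ := if |x| ≤ b then |x| ^ p else 0

lemma truncPow_nonneg (b p x : ℝ) : 0 ≤ truncPow b p x := by
  unfold truncPow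
  split_ifs <;> positivity

lemma truncPow_le_rpow {b p : ℝ} (hb : 0 ≤ b) (hp : 0 ≤ p) (x : ℝ) : truncPow b p x ≤ b ^ p := by
  unfold truncPow
  split_ifs with h
  · exact Real.rpow_le_rpow (abs_nonneg x) h hp
  · positivity

lemma truncPow_le_rpow_of_abs_le {a b p x : ℝ} (hp : 0 ≤ p) (hx : |x| ≤ a) :
    truncPow b p x ≤ a ^ p := by
  unfold truncPow
  split_ifs
  · exact Real.rpow_le_rpow (abs_nonneg x) hx hp
  · exact Real.rpow_nonneg ((abs_nonneg x).trans hx) p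

lemma Nat.ceil_eq_of_mem_Ioc {R : Type*} [Ring R] [LinearOrder R] [IsStrictOrderedRing R]
    [FloorSemiring R] {x : R} {k : ℕ} (h : x ∈ Set.Ioc ((k : R) - 1) k) : ⌈x⌉₊ = k := by
  rcases k with _ | k
  · exact Nat.ceil_eq_zero.2 (by exact_mod_cast h.2)
  · rw [Nat.ceil_eq_iff k.succ_ne_zero]
    exact ⟨by simpa using h.1, h.2⟩

/-- A point `t` lies in the cell `((k-1)δ, kδ]` only for `k = ⌈t/δ⌉₊`. -/
lemma card_filter_exists_mem_Ioc_le {K ι : Type*} [Field K] [LinearOrder K] [IsStrictOrderedRing K]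
    [FloorSemiring K] [Fintype ι] (s : Finset ℕ) (τ : ι → K) {δ : K} (hδ : 0 < δ) :
    #(s.filter fun k : ℕ => ∃ m, τ m ∈ Set.Ioc (((k : K) - 1) * δ) (k * δ)) ≤ Fintype.card ι := by
  calc _ ≤ #(univ.image fun m => ⌈τ m / δ⌉₊) := card_le_card fun k hk => ?_
    _ ≤ Fintype.card ι := card_image_le
  obtain ⟨-, m, hm⟩ := mem_filter.1 hk
  refine mem_image.2 ⟨m, mem_univ m, Nat.ceil_eq_of_mem_Ioc ?_⟩
  rwa [Set.mem_Ioc, lt_div_iff₀ hδ, div_le_iff₀ hδ]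

lemma sum_le_card_mul_add_card_filter_mul {α R : Type*} [Semiring R] [PartialOrder R]
    [IsOrderedRing R] {s : Finset α} (P : α → Prop) [DecidablePred P] {g : α → R} {a b : R}
    (ha : 0 ≤ a) (hgood : ∀ k ∈ s, ¬P k → g k ≤ a) (hbad : ∀ k ∈ s, P k → g k ≤ b) :
    ∑ k ∈ s, g k ≤ #s * a + #(s.filter P) * b := by
  calc ∑ k ∈ s, g k ≤ ∑ k ∈ s, (a + if P k then b else 0) := by
        refine sum_le_sum fun k hk => ?_
        by_cases hP : P k
        · simpa [hP] using (hbad k hk hP).trans (le_add_of_nonneg_left ha)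
        · simpa [hP] using hgood k hk hP
    _ = #s * a + #(s.filter P) * b := by
        rw [sum_add_distrib, ← sum_filter]
        simp [nsmul_eq_mul]

lemma grid_mem_Icc {T δ : ℝ} (hδ : 0 < δ) {k : ℕ} (hk : k ∈ Icc 1 ⌊T / δ⌋₊) :
    ((k : ℝ) - 1) * δ ∈ Set.Icc 0 T ∧ (k : ℝ) * δ ∈ Set.Icc 0 T := by
  obtain ⟨hk1, hkN⟩ := mem_Icc.1 hk
  have hk1' : (1 : ℝ) ≤ k := by exact_mod_cast hk1
  have hkT : (k : ℝ) * δ ≤ T := (le_div_iff₀ hδ).1 ((Nat.le_floor_iff' (by omega)).1 hkN)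
  exact ⟨⟨by nlinarith, by nlinarith⟩, ⟨by positivity, hkT⟩⟩

section Jumps

variable {ι : Type*} [Fintype ι]

noncomputable def jumpPart (c τ : ι → ℝ) (t : ℝ) : ℝ := ∑ m, if τ m ≤ t then c m else 0

lemma jumpPart_eq_of_forall_notMem_Ioc (c τ : ι → ℝ) {a b : ℝ} (hab : a ≤ b)
    (h : ∀ m, τ m ∉ Set.Ioc a b) : jumpPart c τ b = jumpPart c τ a := by
  refine sum_congr rfl fun m _ => ?_
  by_cases hm : τ m ≤ a
  · simp [hm, hm.trans hab]
  · have hmb : ¬τ m ≤ b := fun hmb => h m ⟨not_le.1 hm, hmb⟩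
    simp [hm, hmb]

lemma abs_sub_le_of_holder_of_forall_notMem_Ioc {f : ℝ → ℝ} {γ C T a b : ℝ}
    (hf : ∀ s ∈ Set.Icc (0 : ℝ) T, ∀ t ∈ Set.Icc (0 : ℝ) T, |f s - f t| ≤ C * |s - t| ^ γ)
    (c τ : ι → ℝ) (ha : a ∈ Set.Icc 0 T) (hb : b ∈ Set.Icc 0 T) (hab : a ≤ b)
    (hjump : ∀ m, τ m ∉ Set.Ioc a b) :
    |f b + jumpPart c τ b - (f a + jumpPart c τ a)| ≤ C * (b - a) ^ γ := by
  rw [jumpPart_eq_of_forall_notMem_Ioc c τ hab hjump, add_sub_add_right_eq_sub,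
    ← abs_of_nonneg (sub_nonneg.2 hab)]
  exact hf b hb a ha

theorem sum_truncPow_increments_le (f : ℝ → ℝ) {γ C T p b δ : ℝ} (hC : 0 ≤ C) (hT : 0 ≤ T)
    (hp : 0 ≤ p) (hb : 0 ≤ b) (hδ : 0 < δ)
    (hf : ∀ s ∈ Set.Icc (0 : ℝ) T, ∀ t ∈ Set.Icc (0 : ℝ) T, |f s - f t| ≤ C * |s - t| ^ γ)
    (c τ : ι → ℝ) :
    ∑ k ∈ Icc 1 ⌊T / δ⌋₊, truncPow b p (f (k * δ) + jumpPart c τ (k * δ)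
        - (f ((k - 1) * δ) + jumpPart c τ ((k - 1) * δ)))
      ≤ T * C ^ p * δ ^ (p * γ - 1) + Fintype.card ι * b ^ p := by
  have hgood : ∀ k ∈ Icc 1 ⌊T / δ⌋₊, ¬(∃ m, τ m ∈ Set.Ioc (((k : ℝ) - 1) * δ) (k * δ)) →
      truncPow b p (f (k * δ) + jumpPart c τ (k * δ)
        - (f ((k - 1) * δ) + jumpPart c τ ((k - 1) * δ))) ≤ (C * δ ^ γ) ^ p := by
    intro k hk hjump
    obtain ⟨hk0, hk1⟩ := grid_mem_Icc hδ hk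
    refine truncPow_le_rpow_of_abs_le hp ?_
    simpa [← sub_mul] using abs_sub_le_of_holder_of_forall_notMem_Ioc hf c τ hk0 hk1
      (by linarith) (not_exists.1 hjump)
  refine (sum_le_card_mul_add_card_filter_mul _ (by positivity) hgood
    fun k _ _ => truncPow_le_rpow hb hp _).trans ?_
  calc _ ≤ T / δ * (C * δ ^ γ) ^ p + Fintype.card ι * b ^ p := by
        gcongr
        · simpa using Nat.floor_le (div_nonneg hT hδ.le)
        · exact card_filter_exists_mem_Ioc_le _ τ hδ
    _ = T * C ^ p * δ ^ (p * γ - 1) + Fintype.card ι * b ^ p := by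
        rw [Real.mul_rpow hC (by positivity), ← Real.rpow_mul hδ.le, Real.rpow_sub hδ,
          Real.rpow_one, mul_comm γ p]
        field_simp

end Jumps

theorem truncated_pvariation_of_holder_plus_jumps_vanishes_general
    (f : ℝ → ℝ) (γ C T p Γ : ℝ) (hC : 0 < C)
    (hT : 0 < T) (hp : 0 < p) (hpγ : 1 < p * γ) (hΓ : 0 < Γ)
    (hf : ∀ s ∈ Set.Icc (0 : ℝ) T, ∀ t ∈ Set.Icc (0 : ℝ) T,
      |f s - f t| ≤ C * |s - t| ^ γ)
    (r : ℕ) (c τ : Fin r → ℝ)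
    (X : ℝ → ℝ) (hX : X = fun t => f t + ∑ m, if τ m ≤ t then c m else 0) :
    Tendsto (fun δ : ℝ => ∑ k ∈ Finset.Icc 1 ⌊T / δ⌋₊,
        if |X ((k : ℝ) * δ) - X (((k : ℝ) - 1) * δ)| ≤ 3 * Γ * Real.sqrt δ then
          |X ((k : ℝ) * δ) - X (((k : ℝ) - 1) * δ)| ^ p
        else 0)
      (nhdsWithin 0 (Set.Ioi 0)) (nhds 0) := by
  subst hX
  have hholder : Tendsto (fun δ : ℝ => δ ^ (p * γ - 1)) (𝓝 0) (𝓝 0) := by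
    simpa [Real.zero_rpow (sub_pos.2 hpγ).ne'] using
      (Real.continuousAt_rpow_const 0 _ (Or.inr (sub_pos.2 hpγ).le)).tendsto
  have hthreshold : Tendsto (fun δ : ℝ => (3 * Γ * √δ) ^ p) (𝓝 0) (𝓝 0) := by
    simpa [Real.zero_rpow hp.ne'] using
      (tendsto_const_nhds.mul (Real.continuous_sqrt.tendsto 0)).rpow_const (p := p) (Or.inr hp.le)
  have hbound : Tendsto (fun δ : ℝ => T * C ^ p * δ ^ (p * γ - 1) + r * (3 * Γ * √δ) ^ p)
      (𝓝[>] 0) (𝓝 0) := by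
    simpa using ((hholder.const_mul _).add (hthreshold.const_mul _)).mono_left nhdsWithin_le_nhds
  refine squeeze_zero' (Eventually.of_forall fun δ => sum_nonneg fun k _ => truncPow_nonneg _ _ _)
    ?_ hbound
  filter_upwards [self_mem_nhdsWithin] with δ (hδ : 0 < δ)
  have h := sum_truncPow_increments_le (b := 3 * Γ * √δ) f hC.le hT.le hp.le (by positivity) hδ
    hf c τ
  rwa [Fintype.card_fin] at h

/-- If `f` is `γ`-Hölder on `[0,T]` with constant `C > 0`, `pγ > 1`,
`X = f + J` where `J = ∑_m c_m · 1_{[τ_m,∞)}` is a jump part with distinct jump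
times `τ_m ∈ (0,T)`, and `Γ > 0` is a fixed truncation factor, then the truncated
`δ`-step `p`-variation with threshold `3Γ√δ` vanishes in the limit `δ → 0+`:
for small step sizes the fixed-`Γ` truncation removes every increment containing a
nonzero jump, and the remaining continuous-part increments contribute nothing. -/
theorem truncated_pvariation_of_holder_plus_jumps_vanishes
    (f : ℝ → ℝ) (γ C T p Γ : ℝ) (hγ0 : 0 < γ) (hγ1 : γ ≤ 1) (hC : 0 < C)
    (hT : 0 < T) (hp : 0 < p) (hpγ : 1 < p * γ) (hΓ : 0 < Γ)
    (hf : ∀ s ∈ Set.Icc (0 : ℝ) T, ∀ t ∈ Set.Icc (0 : ℝ) T,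
      |f s - f t| ≤ C * |s - t| ^ γ)
    (r : ℕ) (c τ : Fin r → ℝ) (hτinj : Function.Injective τ)
    (hτmem : ∀ m, τ m ∈ Set.Ioo (0 : ℝ) T)
    (X : ℝ → ℝ) (hX : X = fun t => f t + ∑ m, if τ m ≤ t then c m else 0) :
    Tendsto (fun δ : ℝ => ∑ k ∈ Finset.Icc 1 ⌊T / δ⌋₊,
        if |X ((k : ℝ) * δ) - X (((k : ℝ) - 1) * δ)| ≤ 3 * Γ * Real.sqrt δ then
          |X ((k : ℝ) * δ) - X (((k : ℝ) - 1) * δ)| ^ p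
        else 0)
      (nhdsWithin 0 (Set.Ioi 0)) (nhds 0) :=
  truncated_pvariation_of_holder_plus_jumps_vanishes_general f γ C T p Γ hC hT hp hpγ hΓ hf r c τ X
    hX
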